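/- arXiv:1910.11633 — 3 statements merged into one kernel-verified Lean document; each statement's English description precedes it below -/
import Mathlib

section
/- Let T be the infinite Hermitian positive definite Toeplitz matrix with entries T(i,j) = (−1/2)^{|i−j|}. Then λ(T) = 1/3 and γ(T) = 3/4. -/
open Finset

/-- The quadratic form associated with an infinite matrix `M` evaluated at a finitely
supported sequence `v`: `Q_M(v) = Σ_{i,j} v_i · M(i,j) · conj(v_j)` (its real part;
for Hermitian `M` the sum is real). -/
noncomputable def QM (M : ℕ → ℕ → ℂ) (v : ℕ →₀ ℂ) : ℝ :=
  (∑ i ∈ v.support, ∑ j ∈ v.support, v i * M i j * (starRingEnd ℂ) (v j)).re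

/-- `γ(M) = inf { Q_M(v) : v finitely supported, v₀ = 1 }`. -/
noncomputable def gammaIdx (M : ℕ → ℕ → ℂ) : ℝ :=
  sInf {x | ∃ v : ℕ →₀ ℂ, v 0 = 1 ∧ QM M v = x}

/-- `λ(M) = inf { Q_M(v) : v finitely supported, Σ_i |v_i|² = 1 }`. -/
noncomputable def lambdaIdx (M : ℕ → ℕ → ℂ) : ℝ :=
  sInf {x | ∃ v : ℕ →₀ ℂ, (∑ i ∈ v.support, ‖v i‖ ^ 2) = 1 ∧ QM M v = x}

/-!
For real `ρ`, the quadratic form of `T = (ρ ^ |i - j|)` becomes diagonal in the weighted tail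
sums `s_k = Σ_{i ≥ k} ρ ^ (i - k) v_i`:
`Q_T(v) = (1 - ρ²) Σ_k |s_k|² + ρ² |s_0|²`, and `v_k = s_k - ρ s_{k+1}`.

For `γ`: as `v_0 = s_0 - ρ s_1`, we have
`|s_0|² + (1 - ρ²) |s_1|² - (1 - ρ²) |v_0|² = |ρ s_0 + (1 - ρ²) s_1|² ≥ 0`, and for `|ρ| ≤ 1`
the first sum is at most `Q_T(v)`. Equality holds at `v = (1, -ρ)`, so `γ(T) = 1 - ρ²`.

For `λ` with `-1 ≤ ρ ≤ 0`: summing `|s_k - ρ s_{k+1}|² ≤ (1 - ρ) (|s_k|² - ρ |s_{k+1}|²)` gives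
`(1 + ρ) ‖v‖² ≤ (1 - ρ) Q_T(v)`. The vectors whose tail sums are `1` on `{0, …, n - 1}` approach
equality, so `λ(T) = (1 + ρ) / (1 - ρ)`. At `ρ = -1/2` these are `3/4` and `1/3`.
-/

open ComplexConjugate Complex

lemma one_sub_sq_mul_normSq_sub_ofReal_mul_le (a b : ℂ) (ρ : ℝ) :
    (1 - ρ ^ 2) * normSq (a - ρ * b) ≤ normSq a + (1 - ρ ^ 2) * normSq b := by
  simp only [normSq_apply, sub_re, sub_im, re_ofReal_mul, im_ofReal_mul]
  nlinarith [sq_nonneg (ρ * a.re + (1 - ρ ^ 2) * b.re), sq_nonneg (ρ * a.im + (1 - ρ ^ 2) * b.im)]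

lemma normSq_sub_ofReal_mul_le_of_nonpos (a b : ℂ) {ρ : ℝ} (hρ : ρ ≤ 0) :
    normSq (a - ρ * b) ≤ (1 - ρ) * (normSq a - ρ * normSq b) := by
  simp only [normSq_apply, sub_re, sub_im, re_ofReal_mul, im_ofReal_mul]
  nlinarith [mul_nonneg (neg_nonneg.2 hρ) (sq_nonneg (a.re - b.re)),
    mul_nonneg (neg_nonneg.2 hρ) (sq_nonneg (a.im - b.im))]

section QuadraticForm

variable (M : ℕ → ℕ → ℂ)

lemma QM_eq_of_support_subset {v : ℕ →₀ ℂ} {s : Finset ℕ} (h : v.support ⊆ s) :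
    QM M v = (∑ i ∈ s, ∑ j ∈ s, v i * M i j * conj (v j)).re := by
  have hv : ∀ i ∉ v.support, v i = 0 := fun i => Finsupp.notMem_support_iff.mp
  unfold QM
  congr 1
  rw [sum_subset h fun i _ hi => by simp [hv i hi]]
  exact sum_congr rfl fun i _ => sum_subset h fun j _ hj => by simp [hv j hj]

lemma sum_support_sq_norm_eq {v : ℕ →₀ ℂ} {s : Finset ℕ} (h : v.support ⊆ s) :
    ∑ i ∈ v.support, ‖v i‖ ^ 2 = ∑ i ∈ s, normSq (v i) := by
  rw [sum_subset h fun i _ hi => by simp [Finsupp.notMem_support_iff.mp hi]]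
  exact sum_congr rfl fun i _ => Complex.sq_norm _

lemma QM_smul (c : ℂ) (v : ℕ →₀ ℂ) : QM M (c • v) = normSq c * QM M v := by
  rw [QM_eq_of_support_subset M Finsupp.support_smul, QM, ← re_ofReal_mul,
    ← mul_conj, mul_sum]
  congr 1
  refine sum_congr rfl fun i _ => ?_
  rw [mul_sum]
  refine sum_congr rfl fun j _ => ?_
  simp only [Finsupp.smul_apply, smul_eq_mul, map_mul]
  ring

variable {M}

lemma lambdaIdx_eq_of_forall_le_of_forall_lt {μ : ℝ}
    (hle : ∀ v : ℕ →₀ ℂ, μ * ∑ i ∈ v.support, ‖v i‖ ^ 2 ≤ QM M v)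
    (hlt : ∀ w > μ, ∃ v : ℕ →₀ ℂ, QM M v < w * ∑ i ∈ v.support, ‖v i‖ ^ 2) :
    lambdaIdx M = μ := by
  refine csInf_eq_of_forall_ge_of_forall_gt_exists_lt ⟨_, Finsupp.single 0 1, by simp, rfl⟩
    ?_ fun w hw => ?_
  · rintro x ⟨v, hv, rfl⟩
    simpa [hv] using hle v
  obtain ⟨v, hv⟩ := hlt w hw
  set N := ∑ i ∈ v.support, ‖v i‖ ^ 2
  have hv0 : v ≠ 0 := by
    rintro rfl
    simp [N, QM] at hv
  have hN : 0 < N :=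
    sum_pos (fun i hi => pow_pos (norm_pos_iff.mpr (Finsupp.mem_support_iff.mp hi)) 2)
      (Finsupp.support_nonempty_iff.mpr hv0)
  set c : ℂ := (((√N)⁻¹ : ℝ) : ℂ)
  have hc : normSq c = N⁻¹ := by
    rw [normSq_ofReal, ← mul_inv, Real.mul_self_sqrt hN.le]
  have hc0 : c ≠ 0 := by
    rw [← normSq_pos, hc]
    positivity
  refine ⟨QM M (c • v), ⟨c • v, ?_, rfl⟩, ?_⟩
  · rw [Finsupp.support_smul_eq hc0]
    simp only [Finsupp.smul_apply, smul_eq_mul, norm_mul, mul_pow, ← mul_sum]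
    rw [Complex.sq_norm c, hc]
    exact inv_mul_cancel₀ hN.ne'
  · rw [QM_smul, hc]
    calc N⁻¹ * QM M v < N⁻¹ * (w * N) := by gcongr
      _ = w := by field_simp

end QuadraticForm

/-- The Kac–Murdock–Szegő matrix. -/
noncomputable def kmsMatrix (ρ : ℝ) (i j : ℕ) : ℂ := (ρ : ℂ) ^ ((i : ℤ) - (j : ℤ)).natAbs

namespace KMS

variable (ρ : ℝ)

noncomputable def form (n : ℕ) (v : ℕ → ℂ) : ℂ :=
  ∑ i ∈ range n, ∑ j ∈ range n, v i * kmsMatrix ρ i j * conj (v j)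

noncomputable def powSum (n : ℕ) (v : ℕ → ℂ) : ℂ := ∑ i ∈ range n, (ρ : ℂ) ^ i * v i

noncomputable def tail (n : ℕ) (v : ℕ → ℂ) (k : ℕ) : ℂ := powSum ρ (n - k) fun i => v (k + i)

/-- Its tail sums are `1` on `range n`; its Rayleigh quotient tends to `(1 + ρ) / (1 - ρ)`. -/
noncomputable def testVector (n k : ℕ) : ℂ :=
  (if k < n then 1 else 0) - ρ * (if k + 1 < n then 1 else 0)

variable {ρ}

lemma powSum_succ (n : ℕ) (v : ℕ → ℂ) :
    powSum ρ (n + 1) v = v 0 + ρ * powSum ρ n (fun i => v (i + 1)) := by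
  simp only [powSum, sum_range_succ', mul_sum, pow_succ]
  simp only [pow_zero, one_mul, mul_assoc, mul_left_comm (ρ : ℂ)]
  ring

lemma tail_zero (n : ℕ) (v : ℕ → ℂ) : tail ρ n v 0 = powSum ρ n v := by
  simp [tail]

lemma tail_self (n : ℕ) (v : ℕ → ℂ) : tail ρ n v n = 0 := by
  simp [tail, powSum]

lemma tail_succ (n k : ℕ) (v : ℕ → ℂ) :
    tail ρ (n + 1) v (k + 1) = tail ρ n (fun i => v (i + 1)) k := by
  simp only [tail, Nat.add_sub_add_right, Nat.add_right_comm k 1]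

lemma eq_tail_sub_mul_tail {n k : ℕ} (hk : k < n) (v : ℕ → ℂ) :
    v k = tail ρ n v k - ρ * tail ρ n v (k + 1) := by
  obtain ⟨m, hm⟩ : ∃ m, n - k = m + 1 := ⟨n - k - 1, by omega⟩
  have hm' : n - (k + 1) = m := by omega
  rw [tail, hm, powSum_succ, tail, hm']
  simp only [add_zero, add_assoc, add_comm 1]
  ring

lemma form_succ (n : ℕ) (v : ℕ → ℂ) :
    form ρ (n + 1) v = v 0 * conj (v 0) + v 0 * ρ * conj (powSum ρ n fun i => v (i + 1))
      + ρ * powSum ρ n (fun i => v (i + 1)) * conj (v 0) + form ρ n (fun i => v (i + 1)) := by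
  have succ_succ (i j : ℕ) : kmsMatrix ρ (i + 1) (j + 1) = kmsMatrix ρ i j := by
    simp only [kmsMatrix]; congr 2; push_cast; ring
  have zero_succ (j : ℕ) : kmsMatrix ρ 0 (j + 1) = (ρ : ℂ) ^ (j + 1) := by
    simp only [kmsMatrix]; congr 1
  have succ_zero (i : ℕ) : kmsMatrix ρ (i + 1) 0 = (ρ : ℂ) ^ (i + 1) := by
    simp only [kmsMatrix]; congr 1
  have zero_zero : kmsMatrix ρ 0 0 = 1 := by simp [kmsMatrix]
  simp only [form, powSum, sum_range_succ' _ n, succ_succ, zero_succ, succ_zero, zero_zero,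
    sum_add_distrib, map_sum, map_mul, map_pow, conj_ofReal, mul_sum, sum_mul]
  ring_nf
  ac_rfl

theorem form_eq (n : ℕ) (v : ℕ → ℂ) :
    form ρ n v = (((1 - ρ ^ 2) * ∑ k ∈ range n, normSq (tail ρ n v k)
      + ρ ^ 2 * normSq (powSum ρ n v) : ℝ) : ℂ) := by
  induction n generalizing v with
  | zero => simp [form, powSum]
  | succ n ih =>
    rw [form_succ, ih, sum_range_succ', tail_zero, powSum_succ]
    simp only [tail_succ]
    simp only [ofReal_add, ofReal_mul, ofReal_sub, ofReal_pow,
      ofReal_one, ← mul_conj, map_add, map_mul, conj_ofReal, ofReal_sum]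
    ring

lemma re_form_eq (n : ℕ) (v : ℕ → ℂ) :
    (form ρ n v).re = (1 - ρ ^ 2) * ∑ k ∈ range n, normSq (tail ρ n v k)
      + ρ ^ 2 * normSq (powSum ρ n v) := by
  rw [form_eq, ofReal_re]

lemma sum_normSq_tail_succ (n : ℕ) (v : ℕ → ℂ) :
    ∑ k ∈ range n, normSq (tail ρ n v (k + 1))
      = ∑ k ∈ range n, normSq (tail ρ n v k) - normSq (powSum ρ n v) := by
  have h := sum_range_succ' (fun k => normSq (tail ρ n v k)) n
  rw [sum_range_succ, tail_self, tail_zero, map_zero, add_zero] at h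
  linarith

lemma one_sub_sq_mul_normSq_le_re_form (hρ : ρ ^ 2 ≤ 1) {n : ℕ} (hn : 2 ≤ n) (v : ℕ → ℂ) :
    (1 - ρ ^ 2) * normSq (v 0) ≤ (form ρ n v).re := by
  have hG : normSq (tail ρ n v 0) + normSq (tail ρ n v 1)
      ≤ ∑ k ∈ range n, normSq (tail ρ n v k) := by
    calc normSq (tail ρ n v 0) + normSq (tail ρ n v 1)
        = ∑ k ∈ range 2, normSq (tail ρ n v k) := by simp [sum_range_succ]
      _ ≤ ∑ k ∈ range n, normSq (tail ρ n v k) :=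
        sum_le_sum_of_subset_of_nonneg (range_subset_range.2 hn) fun _ _ _ => normSq_nonneg _
  have hv0 := one_sub_sq_mul_normSq_sub_ofReal_mul_le (tail ρ n v 0) (tail ρ n v 1) ρ
  rw [← eq_tail_sub_mul_tail (by omega) v] at hv0
  rw [tail_zero] at hv0 hG
  rw [re_form_eq]
  nlinarith [mul_le_mul_of_nonneg_left hG (sub_nonneg.2 hρ)]

lemma one_add_mul_sum_normSq_le (hρ₁ : -1 ≤ ρ) (hρ₀ : ρ ≤ 0) (n : ℕ) (v : ℕ → ℂ) :
    (1 + ρ) * ∑ k ∈ range n, normSq (v k) ≤ (1 - ρ) * (form ρ n v).re := by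
  have hv : ∑ k ∈ range n, normSq (v k) ≤ (1 - ρ) * (∑ k ∈ range n, normSq (tail ρ n v k)
      - ρ * ∑ k ∈ range n, normSq (tail ρ n v (k + 1))) := by
    calc ∑ k ∈ range n, normSq (v k)
        = ∑ k ∈ range n, normSq (tail ρ n v k - ρ * tail ρ n v (k + 1)) :=
          sum_congr rfl fun k hk => by rw [← eq_tail_sub_mul_tail (mem_range.1 hk)]
      _ ≤ ∑ k ∈ range n, (1 - ρ) * (normSq (tail ρ n v k) - ρ * normSq (tail ρ n v (k + 1))) :=
          sum_le_sum fun k _ => normSq_sub_ofReal_mul_le_of_nonpos _ _ hρ₀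
      _ = _ := by rw [← mul_sum, sum_sub_distrib, ← mul_sum]
  rw [sum_normSq_tail_succ] at hv
  rw [re_form_eq]
  nlinarith [mul_le_mul_of_nonneg_left hv (by linarith : 0 ≤ 1 + ρ),
    mul_nonneg (mul_nonneg (by linarith : 0 ≤ 1 - ρ) (neg_nonneg.2 hρ₀))
      (normSq_nonneg (powSum ρ n v))]

lemma tail_sub_mul_shift (t : ℕ → ℂ) {n k : ℕ} (hk : k ≤ n) :
    tail ρ n (fun i => t i - ρ * t (i + 1)) k = t k - ρ ^ (n - k) * t n := by
  have h := sum_range_sub' (fun i => (ρ : ℂ) ^ i * t (k + i)) (n - k)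
  rw [Nat.add_sub_cancel' hk, pow_zero, one_mul, add_zero] at h
  rw [tail, powSum, ← h]
  refine sum_congr rfl fun i _ => ?_
  rw [← add_assoc, pow_succ]
  ring

lemma testVector_of_le {n k : ℕ} (hk : n ≤ k) : testVector ρ n k = 0 := by
  simp [testVector, hk.not_gt, (hk.trans k.le_succ).not_gt]

lemma re_form_testVector (n : ℕ) :
    (form ρ (n + 1) (testVector ρ (n + 1))).re = (1 - ρ ^ 2) * (n + 1) + ρ ^ 2 := by
  have htail : ∀ k ∈ range (n + 1), tail ρ (n + 1) (testVector ρ (n + 1)) k = 1 := fun k hk =>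
    (tail_sub_mul_shift (fun i => if i < n + 1 then (1 : ℂ) else 0) (mem_range.1 hk).le).trans
      (by simp [mem_range.1 hk])
  rw [re_form_eq, sum_congr rfl fun k hk => congrArg normSq (htail k hk), ← tail_zero,
    htail 0 (by simp)]
  simp

lemma sum_normSq_testVector (n : ℕ) :
    ∑ k ∈ range (n + 1), normSq (testVector ρ (n + 1) k) = n * (1 - ρ) ^ 2 + 1 := by
  have h : ∀ k ∈ range n, testVector ρ (n + 1) k = ((1 - ρ : ℝ) : ℂ) := fun k hk => by
    simp [testVector, (mem_range.1 hk).trans n.lt_succ_self, mem_range.1 hk]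
  rw [sum_range_succ, sum_congr rfl fun k hk => congrArg normSq (h k hk), sum_const, card_range,
    normSq_ofReal, nsmul_eq_mul, sq, show testVector ρ (n + 1) n = 1 by simp [testVector], map_one]

end KMS

lemma QM_kmsMatrix (ρ : ℝ) {v : ℕ →₀ ℂ} {n : ℕ} (h : v.support ⊆ range n) :
    QM (kmsMatrix ρ) v = (KMS.form ρ n v).re :=
  QM_eq_of_support_subset _ h

theorem gammaIdx_kmsMatrix {ρ : ℝ} (hρ : |ρ| ≤ 1) : gammaIdx (kmsMatrix ρ) = 1 - ρ ^ 2 := by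
  refine IsLeast.csInf_eq ⟨⟨Finsupp.single 0 1 + Finsupp.single 1 (-ρ : ℂ), by simp, ?_⟩, ?_⟩
  · have hsupp : (Finsupp.single 0 1 + Finsupp.single 1 (-ρ : ℂ)).support ⊆ range 2 :=
      Finsupp.support_add.trans <| union_subset
        (Finsupp.support_single_subset.trans (by simp))
        (Finsupp.support_single_subset.trans (by simp))
    rw [QM_kmsMatrix ρ hsupp]
    simp [KMS.form, kmsMatrix, sum_range_succ]
    ring
  · rintro x ⟨v, hv, rfl⟩
    obtain ⟨n, hn⟩ := v.support.exists_nat_subset_range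
    rw [QM_kmsMatrix ρ (hn.trans (range_subset_range.2 (n.le_add_right 2)))]
    simpa [hv] using KMS.one_sub_sq_mul_normSq_le_re_form ((sq_le_one_iff_abs_le_one ρ).2 hρ)
      (by omega) v

theorem lambdaIdx_kmsMatrix {ρ : ℝ} (hρ₁ : -1 ≤ ρ) (hρ₀ : ρ ≤ 0) :
    lambdaIdx (kmsMatrix ρ) = (1 + ρ) / (1 - ρ) := by
  have hρ : 0 < 1 - ρ := by linarith
  refine lambdaIdx_eq_of_forall_le_of_forall_lt (fun v => ?_) fun w hw => ?_
  · obtain ⟨n, hn⟩ := v.support.exists_nat_subset_range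
    rw [QM_kmsMatrix ρ hn, sum_support_sq_norm_eq hn, div_mul_eq_mul_div, div_le_iff₀ hρ,
      mul_comm _ (1 - ρ)]
    exact KMS.one_add_mul_sum_normSq_le hρ₁ hρ₀ n v
  set μ := (1 + ρ) / (1 - ρ)
  have hμ : μ * (1 - ρ) = 1 + ρ := div_mul_cancel₀ _ hρ.ne'
  obtain ⟨n, hn⟩ := exists_nat_gt ((1 - μ) / (w - μ))
  have hsupp : ∀ k, KMS.testVector ρ (n + 1) k ≠ 0 → k ∈ range (n + 1) := fun k hk =>
    mem_range.2 (not_le.1 fun h => hk (KMS.testVector_of_le h))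
  refine ⟨Finsupp.onFinset _ _ hsupp, ?_⟩
  rw [QM_kmsMatrix ρ Finsupp.support_onFinset_subset,
    sum_support_sq_norm_eq Finsupp.support_onFinset_subset, Finsupp.coe_onFinset,
    KMS.re_form_testVector, KMS.sum_normSq_testVector]
  set S : ℝ := n * (1 - ρ) ^ 2 + 1
  have hQ : (1 - ρ ^ 2) * (n + 1) + ρ ^ 2 = μ * S + (1 - μ) := by
    linear_combination (-(n : ℝ) * (1 - ρ)) * hμ
  have hS : (n : ℝ) < S := by nlinarith
  have hgap : 1 - μ < (w - μ) * S := by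
    rw [div_lt_iff₀ (sub_pos.2 hw)] at hn
    nlinarith
  linarith

/-- for the Hermitian positive definite Toeplitz matrix
`T(i,j) = (−1/2)^{|i−j|}` one has `λ(T) = 1/3` and `γ(T) = 3/4`. -/
theorem lambda_gamma_of_example_toeplitz (T : ℕ → ℕ → ℂ)
    (hT : ∀ i j : ℕ, T i j = (-(1 / 2) : ℂ) ^ ((i : ℤ) - (j : ℤ)).natAbs) :
    lambdaIdx T = 1 / 3 ∧ gammaIdx T = 3 / 4 := by
  obtain rfl : T = kmsMatrix (-(1 / 2)) := by
    funext i j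
    simp [hT, kmsMatrix]
  rw [lambdaIdx_kmsMatrix (by norm_num) (by norm_num),
    gammaIdx_kmsMatrix (by norm_num [abs_of_neg])]
  norm_num
end

section
/- Let μ be a finite positive Borel measure on ℂ with compact and infinite support such that 0 ∉ supp(μ), and let M = M(μ) be its moment matrix. Then the following are equivalent: (1) γ(M) = 0; (2) for every k ∈ ℤ, the function z ↦ z^k belongs to the closure in L²(μ) of the linear span of the functions z ↦ z^{k+1}, z ↦ z^{k+2}, … . -/
open MeasureTheory Finset

/-- The (closed) support of a Borel measure on `ℂ`: the set of points all of whose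
neighbourhoods have positive measure. -/
def measSupport (μ : Measure ℂ) : Set ℂ :=
  {z : ℂ | ∀ U ∈ nhds z, μ U ≠ 0}

/-- The moment matrix of a compactly supported measure `μ` on `ℂ`:
`M(μ)(i,j) = ∫ z^i conj(z)^j dμ(z)`. -/
noncomputable def momentMatrix (μ : Measure ℂ) : ℕ → ℕ → ℂ :=
  fun i j => ∫ z, z ^ i * (starRingEnd ℂ) z ^ j ∂μ

/-!
Writing `zmon k` for the class of `z ↦ z ^ k` in `L²(μ)`, the moment matrix is the Gram matrix
`M(i,j) = ⟪zmon j, zmon i⟫`, so `Q_M(v) = ‖∑ vᵢ zmon i‖²` and `γ(M)` is the squared distance from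
`1 = zmon 0` to the span of `zmon 1, zmon 2, …`. Hence `γ(M) = 0` is exactly condition (2) for
`k = 0`. Since the support is compact and avoids `0`, multiplication by `z ^ k` is a bounded
operator on `L²(μ)` sending `zmon m` to `zmon (m + k)`; it carries condition (2) at `0` to
condition (2) at `k`.
-/

open scoped InnerProductSpace

theorem sInf_image_dist_sq {X : Type*} [PseudoMetricSpace X] (x : X) {s : Set X}
    (hs : s.Nonempty) : sInf ((fun y => dist x y ^ 2) '' s) = Metric.infDist x s ^ 2 := by
  have hsq : MonotoneOn (fun t : ℝ => t ^ 2) (dist x '' s) := by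
    rintro _ ⟨a, -, rfl⟩ _ ⟨b, -, rfl⟩ hab
    exact pow_le_pow_left₀ dist_nonneg hab 2
  rw [Metric.infDist_eq_iInf, ← sInf_image',
    hsq.map_csInf_of_continuousWithinAt (continuous_pow 2).continuousWithinAt (hs.image _)
      ⟨0, by rintro _ ⟨a, -, rfl⟩; exact dist_nonneg⟩, Set.image_image]

theorem sInf_image_dist_sq_eq_zero_iff {X : Type*} [PseudoMetricSpace X] {x : X} {s : Set X}
    (hs : s.Nonempty) : sInf ((fun y => dist x y ^ 2) '' s) = 0 ↔ x ∈ closure s := by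
  rw [sInf_image_dist_sq x hs, Metric.mem_closure_iff_infDist_zero hs, sq_eq_zero_iff]

section Gram

variable {E : Type*} [NormedAddCommGroup E] [InnerProductSpace ℂ E]

theorem QM_gram_eq_norm_sq (u : ℕ → E) (v : ℕ →₀ ℂ) :
    QM (fun i j => ⟪u j, u i⟫_ℂ) v = ‖Finsupp.linearCombination ℂ u v‖ ^ 2 := by
  rw [← inner_self_eq_norm_sq (𝕜 := ℂ), QM, Finsupp.linearCombination_apply, Finsupp.sum]
  congr 1
  simp only [sum_inner, inner_sum, inner_smul_left, inner_smul_right, Finset.mul_sum]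
  exact Finset.sum_congr rfl fun i _ => Finset.sum_congr rfl fun j _ => by ring

theorem dist_linearCombination_single_sub (u : ℕ → E) (v : ℕ →₀ ℂ) :
    dist (u 0) (Finsupp.linearCombination ℂ u (Finsupp.single 0 1 - v)) =
      ‖Finsupp.linearCombination ℂ u v‖ := by
  rw [map_sub, Finsupp.linearCombination_single, one_smul, dist_eq_norm, sub_sub_cancel]

theorem gammaIdx_gram_eq_zero_iff (u : ℕ → E) :
    gammaIdx (fun i j => ⟪u j, u i⟫_ℂ) = 0 ↔
      u 0 ∈ closure (Submodule.span ℂ (u '' {0}ᶜ) : Set E) := by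
  have hvalues : {x | ∃ v : ℕ →₀ ℂ, v 0 = 1 ∧ QM (fun i j => ⟪u j, u i⟫_ℂ) v = x} =
      (fun y => dist (u 0) y ^ 2) '' (Submodule.span ℂ (u '' {0}ᶜ) : Set E) := by
    ext x
    constructor
    · rintro ⟨v, hv0, rfl⟩
      refine ⟨_, (Finsupp.mem_span_image_iff_linearCombination ℂ).mpr
        ⟨Finsupp.single 0 1 - v, (Finsupp.mem_supported' _ _).mpr fun i hi => ?_, rfl⟩, ?_⟩
      · rw [Set.notMem_compl_iff, Set.mem_singleton_iff] at hi
        simp [hi, hv0]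
      · rw [QM_gram_eq_norm_sq, ← dist_linearCombination_single_sub]
    · rintro ⟨_, hy, rfl⟩
      obtain ⟨w, hw, rfl⟩ := (Finsupp.mem_span_image_iff_linearCombination ℂ).mp hy
      have hw0 : w 0 = 0 := (Finsupp.mem_supported' _ _).mp hw 0 (by simp)
      refine ⟨Finsupp.single 0 1 - w, by simp [hw0], ?_⟩
      rw [QM_gram_eq_norm_sq, ← dist_linearCombination_single_sub, sub_sub_cancel]
  rw [gammaIdx, hvalues, sInf_image_dist_sq_eq_zero_iff ⟨0, Submodule.zero_mem _⟩]

end Gram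

theorem mem_closure_span_tail_of_shift {R M : Type*} [Semiring R] [AddCommMonoid M] [Module R M]
    [TopologicalSpace M] (T : M →L[R] M) (e : ℤ → M) {j k : ℤ} (hT : ∀ m, T (e m) = e (m + k))
    (h : e j ∈ closure (Submodule.span R {f | ∃ m, j < m ∧ f = e m} : Set M)) :
    e (j + k) ∈ closure (Submodule.span R {f | ∃ m, j + k < m ∧ f = e m} : Set M) := by
  have hmap : (Submodule.span R {f | ∃ m, j < m ∧ f = e m}).map (T : M →ₗ[R] M) ≤
      Submodule.span R {f | ∃ m, j + k < m ∧ f = e m} := by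
    rw [Submodule.map_span_le]
    rintro _ ⟨m, hm, rfl⟩
    exact Submodule.subset_span ⟨m + k, by omega, hT m⟩
  rw [← hT]
  exact closure_mono hmap (image_closure_subset_closure_image T.continuous ⟨_, h, rfl⟩)

theorem setOf_pos_eq_image_natCast {M : Type*} (e : ℤ → M) :
    {f | ∃ m : ℤ, 0 < m ∧ f = e m} = (fun n : ℕ => e n) '' {0}ᶜ := by
  ext f
  constructor
  · rintro ⟨m, hm, rfl⟩
    refine ⟨m.toNat, by rw [Set.mem_compl_singleton_iff]; omega, ?_⟩
    exact congrArg e (Int.toNat_of_nonneg hm.le)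
  · rintro ⟨n, hn, rfl⟩
    exact ⟨n, by rw [Set.mem_compl_singleton_iff] at hn; omega, rfl⟩

theorem ae_mem_measSupport (μ : Measure ℂ) : ∀ᵐ z ∂μ, z ∈ measSupport μ := by
  rw [ae_iff]
  refine measure_null_of_locally_null _ fun z hz => ?_
  simp only [measSupport, Set.mem_ofPred_eq, not_forall, not_ne_iff] at hz
  obtain ⟨U, hU, hU0⟩ := hz
  exact ⟨U, mem_nhdsWithin_of_mem_nhds hU, hU0⟩

section Laurent

variable {μ : Measure ℂ}

theorem exists_ae_norm_zpow_le (hK : IsCompact (measSupport μ)) (h0 : (0 : ℂ) ∉ measSupport μ)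
    (k : ℤ) : ∃ C, ∀ᵐ z ∂μ, ‖z ^ k‖ ≤ C := by
  obtain ⟨C, hC⟩ := hK.exists_bound_of_continuousOn
    (continuousOn_id.zpow₀ k fun z hz => Or.inl (ne_of_mem_of_not_mem hz h0))
  exact ⟨C, (ae_mem_measSupport μ).mono hC⟩

theorem exists_clm_ae_eq_zpow_mul (hK : IsCompact (measSupport μ))
    (h0 : (0 : ℂ) ∉ measSupport μ) (k : ℤ) :
    ∃ T : Lp ℂ 2 μ →L[ℂ] Lp ℂ 2 μ, ∀ f, T f =ᵐ[μ] fun z => z ^ k * f z := by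
  obtain ⟨C, hC⟩ := exists_ae_norm_zpow_le hK h0 k
  have hmem : MemLp (fun z : ℂ => z ^ k) ⊤ μ :=
    memLp_top_of_bound (measurable_id.pow_const k).aestronglyMeasurable C hC
  refine ⟨(ContinuousLinearMap.mul ℂ ℂ).holderL μ ⊤ 2 2 hmem.toLp, fun f => ?_⟩
  filter_upwards [(ContinuousLinearMap.mul ℂ ℂ).coeFn_holder (r := 2) hmem.toLp f,
    hmem.coeFn_toLp] with z hT hg
  rw [ContinuousLinearMap.holderL_apply_apply, hT, ContinuousLinearMap.mul_apply', hg]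

variable {zmon : ℤ → Lp ℂ 2 μ}

theorem momentMatrix_eq_inner (hzmon : ∀ k : ℤ, (zmon k : ℂ → ℂ) =ᵐ[μ] fun z => z ^ k)
    (i j : ℕ) : momentMatrix μ i j = ⟪zmon j, zmon i⟫_ℂ := by
  rw [MeasureTheory.L2.inner_def, momentMatrix]
  refine integral_congr_ae ?_
  filter_upwards [hzmon i, hzmon j] with z hi hj
  rw [RCLike.inner_apply, hi, hj, zpow_natCast, zpow_natCast, map_pow, mul_comm]

theorem exists_clm_map_zmon (hzmon : ∀ k : ℤ, (zmon k : ℂ → ℂ) =ᵐ[μ] fun z => z ^ k)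
    (hK : IsCompact (measSupport μ)) (h0 : (0 : ℂ) ∉ measSupport μ) (k : ℤ) :
    ∃ T : Lp ℂ 2 μ →L[ℂ] Lp ℂ 2 μ, ∀ m, T (zmon m) = zmon (m + k) := by
  obtain ⟨T, hT⟩ := exists_clm_ae_eq_zpow_mul hK h0 k
  refine ⟨T, fun m => Lp.ext ?_⟩
  filter_upwards [hT (zmon m), hzmon m, hzmon (m + k), ae_mem_measSupport μ]
    with z hTz hm hmk hz
  rw [hTz, hm, hmk, zpow_add₀ (ne_of_mem_of_not_mem hz h0), mul_comm]

end Laurent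

theorem gamma_zero_iff_laurent_shift_general (μ : Measure ℂ)
    (hcompact : IsCompact (measSupport μ))
    (h0 : (0 : ℂ) ∉ measSupport μ)
    (zmon : ℤ → Lp ℂ 2 μ) (hzmon : ∀ k : ℤ, (zmon k : ℂ → ℂ) =ᵐ[μ] fun z => z ^ k) :
    gammaIdx (momentMatrix μ) = 0 ↔
      ∀ k : ℤ, zmon k ∈ closure
        (Submodule.span ℂ {f : Lp ℂ 2 μ | ∃ m : ℤ, k < m ∧ f = zmon m} : Set (Lp ℂ 2 μ)) := by
  have hM : momentMatrix μ = fun i j : ℕ => ⟪zmon j, zmon i⟫_ℂ :=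
    funext₂ (momentMatrix_eq_inner hzmon)
  rw [hM, gammaIdx_gram_eq_zero_iff (fun n : ℕ => zmon n), ← setOf_pos_eq_image_natCast]
  refine ⟨fun h k => ?_, fun h => h 0⟩
  obtain ⟨T, hT⟩ := exists_clm_map_zmon hzmon hcompact h0 k
  simpa using mem_closure_span_tail_of_shift T zmon hT h

/-- let `μ` be a finite positive Borel measure on `ℂ` with compact infinite
support and `0 ∉ supp(μ)`; let `M = M(μ)` be its moment matrix, and let `zmon k ∈ L²(μ)`
be (the class of) the Laurent monomial `z ↦ z^k` for `k ∈ ℤ`.  Then `γ(M) = 0` if and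
only if for every `k ∈ ℤ` the function `z^k` belongs to the closure in `L²(μ)` of the
linear span of `z^{k+1}, z^{k+2}, …`. -/
theorem gamma_zero_iff_laurent_shift (μ : Measure ℂ) [IsFiniteMeasure μ]
    (hcompact : IsCompact (measSupport μ)) (hinf : (measSupport μ).Infinite)
    (h0 : (0 : ℂ) ∉ measSupport μ)
    (zmon : ℤ → Lp ℂ 2 μ) (hzmon : ∀ k : ℤ, (zmon k : ℂ → ℂ) =ᵐ[μ] fun z => z ^ k) :
    gammaIdx (momentMatrix μ) = 0 ↔
      ∀ k : ℤ, zmon k ∈ closure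
        (Submodule.span ℂ {f : Lp ℂ 2 μ | ∃ m : ℤ, k < m ∧ f = zmon m} : Set (Lp ℂ 2 μ)) :=
  gamma_zero_iff_laurent_shift_general μ hcompact h0 zmon hzmon
end

section
/- Let A ⊆ ℂ be an open annulus containing the unit circle, let g : A → ℂ be analytic and injective with g'(ζ) ≠ 0 for every ζ on the unit circle, so that Γ = g(unit circle) is an analytic Jordan curve. Let w : ℂ → ℝ be continuous and strictly positive on Γ, and let μ be the finite positive Borel measure on Γ defined by ∫ f dμ = ∫₀^{2π} f(g(e^{iθ})) · w(g(e^{iθ})) · |g'(e^{iθ})| dθ for every bounded Borel function f. Then P²(μ) ≠ L²(μ). -/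
open MeasureTheory

/-- `P²(μ)`: the closure in `L²(μ)` of the set of (classes of) polynomial functions. -/
def Psq (μ : Measure ℂ) : Set (Lp ℂ 2 μ) :=
  closure {f : Lp ℂ 2 μ | ∃ p : Polynomial ℂ, (f : ℂ → ℂ) =ᵐ[μ] fun z => p.eval z}

/-!
Write `φ θ = g (exp (θ * I))` and `u θ = w (φ θ) * ‖g' (exp (θ * I))‖`, so that `μ` is the image of
`u dθ` under `φ`, and `φ' = D (φ) * u` with `D = T / w`, `T` the unit tangent of `Γ`. The bounded
function `E = conj D` on `Γ` then satisfies `⟪E, f⟫ = ∫₀^{2π} f (φ θ) φ' θ dθ = ∫_Γ f dz`, which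
vanishes for polynomials `f` since they have polynomial primitives and `Γ` is closed. Hence `E` is
orthogonal to `P²(μ)`, while `‖E‖² = ∫₀^{2π} |φ'|² / u dθ > 0`.
-/

open Set Function ComplexConjugate
open Complex (I exp)

theorem Set.InjOn.continuousOn_invFunOn_image {X Y : Type*} [TopologicalSpace X] [Nonempty X]
    [TopologicalSpace Y] [T2Space Y] {f : X → Y} {s : Set X} (hinj : InjOn f s)
    (hs : IsCompact s) (hf : ContinuousOn f s) : ContinuousOn (invFunOn f s) (f '' s) := by
  refine continuousOn_iff_isClosed.mpr fun t ht => ⟨f '' (s ∩ t), ?_, ?_⟩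
  · exact ((hs.inter_right ht).image_of_continuousOn (hf.mono inter_subset_left)).isClosed
  · ext y
    constructor
    · rintro ⟨hyt, x, hx, rfl⟩
      rw [mem_preimage, hinj.leftInvOn_invFunOn hx] at hyt
      exact ⟨⟨x, ⟨hx, hyt⟩, rfl⟩, x, hx, rfl⟩
    · rintro ⟨⟨x, ⟨hx, hxt⟩, rfl⟩, -⟩
      exact ⟨by rwa [mem_preimage, hinj.leftInvOn_invFunOn hx], x, hx, rfl⟩

section IndicatorOfCompact

variable {α E : Type*} [TopologicalSpace α] [NormedAddCommGroup E] {K : Set α} {h : α → E}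

theorem IsCompact.exists_bound_indicator (hK : IsCompact K) (hh : ContinuousOn h K) :
    ∃ C, ∀ x, ‖K.indicator h x‖ ≤ C := by
  obtain ⟨C, hC⟩ := hK.exists_bound_of_continuousOn hh
  refine ⟨max C 0, fun x => ?_⟩
  by_cases hx : x ∈ K
  · simpa [hx] using Or.inl (hC x hx)
  · simp [hx]

variable [MeasurableSpace α] [OpensMeasurableSpace α] [T2Space α] [MeasurableSpace E]
  [BorelSpace E]

theorem IsCompact.measurable_indicator (hK : IsCompact K) (hh : ContinuousOn h K) :
    Measurable (K.indicator h) := by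
  classical
  rw [← piecewise_eq_indicator]
  exact hh.measurable_piecewise continuousOn_const hK.measurableSet

end IndicatorOfCompact

theorem integral_eval_mul_deriv_eq_zero_of_eq {φ φ' : ℝ → ℂ} {a b : ℝ}
    (hφ : ∀ θ ∈ uIcc a b, HasDerivAt φ (φ' θ) θ) (hφ' : ContinuousOn φ' (uIcc a b))
    (hloop : φ a = φ b) (p : Polynomial ℂ) : ∫ θ in a..b, p.eval (φ θ) * φ' θ = 0 := by
  have hφc : ContinuousOn φ (uIcc a b) := fun θ hθ => (hφ θ hθ).continuousAt.continuousWithinAt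
  have hint (q : Polynomial ℂ) : IntervalIntegrable (fun θ => q.eval (φ θ) * φ' θ) volume a b :=
    ((q.continuous.comp_continuousOn hφc).mul hφ').intervalIntegrable
  induction p using Polynomial.induction_on' with
  | add p q hp hq =>
    simp only [Polynomial.eval_add, add_mul]
    rw [intervalIntegral.integral_add (hint p) (hint q), hp, hq, add_zero]
  | monomial n c =>
    have hprim : ∀ θ ∈ uIcc a b, HasDerivAt (fun θ => c * φ θ ^ (n + 1) / (n + 1))
        ((Polynomial.monomial n c).eval (φ θ) * φ' θ) θ := by
      intro θ hθ
      have hd := (((hφ θ hθ).pow (n + 1)).const_mul c).div_const ((n : ℂ) + 1)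
      simp only [Pi.pow_apply, Nat.add_sub_cancel, Nat.cast_add_one] at hd
      refine hd.congr_deriv ?_
      rw [Polynomial.eval_monomial]
      field_simp
    rw [intervalIntegral.integral_eq_sub_of_hasDerivAt hprim (hint _), hloop, sub_self]

theorem psq_ne_univ_of_orthogonal {μ : Measure ℂ} {E : ℂ → ℂ} (hE : MemLp E 2 μ)
    (horth : ∀ p : Polynomial ℂ, ∫ z, conj (E z) * p.eval z ∂μ = 0) (hE0 : ¬ E =ᵐ[μ] 0) :
    Psq μ ≠ univ := by
  intro huniv
  have hperp : Psq μ ⊆ {f | inner ℂ (hE.toLp E) f = 0} := by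
    refine closure_minimal ?_ (isClosed_eq (continuous_const.inner continuous_id) continuous_const)
    rintro f ⟨p, hp⟩
    rw [mem_ofPred_eq, L2.inner_def, ← horth p]
    refine integral_congr_ae ?_
    filter_upwards [hE.coeFn_toLp, hp] with z hEz hpz
    simp only [hEz, hpz, RCLike.inner_apply, mul_comm]
  have he : hE.toLp E = 0 := inner_self_eq_zero.mp (hperp (by rw [huniv]; trivial))
  exact hE0 (hE.coeFn_toLp.symm.trans (by rw [he]; exact Lp.coeFn_zero _ _ _))

section WeightedLoop

variable {μ : Measure ℂ} {φ : ℝ → ℂ} {u : ℝ → ℝ} {a b : ℝ} {K : Set ℂ}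

theorem integral_indicator_eq_intervalIntegral
    (hμ : ∀ f : ℂ → ℂ, Measurable f → (∃ C : ℝ, ∀ z, ‖f z‖ ≤ C) →
      ∫ z, f z ∂μ = ∫ θ in a..b, f (φ θ) * (u θ : ℂ))
    (hK : IsCompact K) (hφK : ∀ θ, φ θ ∈ K) {h : ℂ → ℂ} (hh : ContinuousOn h K) :
    ∫ z, K.indicator h z ∂μ = ∫ θ in a..b, h (φ θ) * (u θ : ℂ) := by
  rw [hμ _ (hK.measurable_indicator hh) (hK.exists_bound_indicator hh)]
  simp only [indicator_of_mem (hφK _)]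

theorem psq_ne_univ_of_loop [IsFiniteMeasure μ]
    (hμ : ∀ f : ℂ → ℂ, Measurable f → (∃ C : ℝ, ∀ z, ‖f z‖ ≤ C) →
      ∫ z, f z ∂μ = ∫ θ in a..b, f (φ θ) * (u θ : ℂ))
    (hK : IsCompact K) (hφK : ∀ θ, φ θ ∈ K) {D : ℂ → ℂ} (hD : ContinuousOn D K)
    (hφ : ∀ θ, HasDerivAt φ (D (φ θ) * u θ) θ) (hloop : φ a = φ b) (hab : a < b)
    (hu : Continuous u) (hu_pos : ∀ θ, 0 < u θ) (hD0 : ∀ θ, D (φ θ) ≠ 0) :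
    Psq μ ≠ univ := by
  have hφc : Continuous φ := continuous_iff_continuousAt.mpr fun θ => (hφ θ).continuousAt
  have hDφ : Continuous fun θ => D (φ θ) := hD.comp_continuous hφc hφK
  have hconjD : ContinuousOn (fun z => conj (D z)) K := Complex.continuous_conj.comp_continuousOn hD
  refine psq_ne_univ_of_orthogonal (E := K.indicator fun z => conj (D z)) ?_ (fun p => ?_) ?_
  · obtain ⟨C, hC⟩ := hK.exists_bound_indicator hconjD
    exact MemLp.of_bound (hK.measurable_indicator hconjD).aestronglyMeasurable C (ae_of_all _ hC)
  · have hconjE (z : ℂ) : conj (K.indicator (fun z => conj (D z)) z) * p.eval z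
        = K.indicator (fun z => D z * p.eval z) z := by
      by_cases hz : z ∈ K
      · simp only [indicator_of_mem hz, Complex.conj_conj]
      · simp only [indicator_of_notMem hz, map_zero, zero_mul]
    simp_rw [hconjE]
    rw [integral_indicator_eq_intervalIntegral hμ hK hφK (h := fun z => D z * p.eval z)
      (hD.mul p.continuous.continuousOn)]
    simp_rw [mul_comm (D _), mul_assoc]
    exact integral_eval_mul_deriv_eq_zero_of_eq (fun θ _ => hφ θ)
      (hDφ.mul (Complex.continuous_ofReal.comp hu)).continuousOn hloop p
  · intro hE0
    have hnormSq : ∫ z, K.indicator (fun z => (Complex.normSq (D z) : ℂ)) z ∂μ = 0 := by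
      refine integral_eq_zero_of_ae ?_
      filter_upwards [hE0] with z hz
      by_cases hzK : z ∈ K <;> simp_all
    rw [integral_indicator_eq_intervalIntegral hμ hK hφK
      (h := fun z => (Complex.normSq (D z) : ℂ)) (Complex.continuous_ofReal.comp_continuousOn
        (Complex.continuous_normSq.comp_continuousOn hD))] at hnormSq
    have hpos : 0 < ∫ θ in a..b, Complex.normSq (D (φ θ)) * u θ :=
      intervalIntegral.intervalIntegral_pos_of_pos_on
        (((Complex.continuous_normSq.comp hDφ).mul hu).intervalIntegrable _ _)
        (fun θ _ => mul_pos (Complex.normSq_pos.mpr (hD0 θ)) (hu_pos θ)) hab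
    refine hpos.ne' (Complex.ofReal_eq_zero.mp ?_)
    rw [← intervalIntegral.integral_ofReal]
    push_cast
    exact hnormSq

end WeightedLoop

section CircleImage

variable {A : Set ℂ} {g : ℂ → ℂ}

theorem exp_ofReal_mul_I_mem_sphere (θ : ℝ) : exp (θ * I) ∈ Metric.sphere (0 : ℂ) 1 := by
  simp [Complex.norm_exp_ofReal_mul_I]

theorem hasDerivAt_comp_exp_ofReal_mul_I (hcirc : Metric.sphere (0 : ℂ) 1 ⊆ A)
    (hg : AnalyticOnNhd ℂ g A) (θ : ℝ) :
    HasDerivAt (fun θ : ℝ => g (exp (θ * I))) (deriv g (exp (θ * I)) * (exp (θ * I) * I)) θ := by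
  have hexp : HasDerivAt (fun θ : ℝ => exp (θ * I)) (exp (θ * I) * I) θ := by
    simpa using ((hasDerivAt_id (θ : ℝ)).ofReal_comp.mul_const I).cexp
  exact (hg _ (hcirc (exp_ofReal_mul_I_mem_sphere θ))).differentiableAt.hasDerivAt.comp θ hexp

/-- The unit tangent of the curve `θ ↦ g (exp (θ * I))` at a point `z` of its image. -/
noncomputable def unitTangent (g : ℂ → ℂ) (z : ℂ) : ℂ :=
  let ζ := invFunOn g (Metric.sphere 0 1) z
  deriv g ζ * (ζ * I) / ‖deriv g ζ‖

theorem unitTangent_mul_norm_deriv (hginj : InjOn g (Metric.sphere 0 1)) {ζ : ℂ}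
    (hζ : ζ ∈ Metric.sphere (0 : ℂ) 1) (hg'ζ : deriv g ζ ≠ 0) :
    unitTangent g (g ζ) * ‖deriv g ζ‖ = deriv g ζ * (ζ * I) := by
  rw [unitTangent, hginj.leftInvOn_invFunOn hζ, div_mul_cancel₀]
  exact Complex.ofReal_ne_zero.mpr (norm_ne_zero_iff.mpr hg'ζ)

theorem unitTangent_ne_zero (hginj : InjOn g (Metric.sphere 0 1)) {ζ : ℂ}
    (hζ : ζ ∈ Metric.sphere (0 : ℂ) 1) (hg'ζ : deriv g ζ ≠ 0) : unitTangent g (g ζ) ≠ 0 := by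
  intro h
  have hmul := unitTangent_mul_norm_deriv hginj hζ hg'ζ
  rw [h, zero_mul] at hmul
  exact mul_ne_zero hg'ζ (mul_ne_zero (ne_zero_of_mem_unit_sphere ⟨ζ, hζ⟩) Complex.I_ne_zero)
    hmul.symm

theorem continuousOn_unitTangent (hcirc : Metric.sphere (0 : ℂ) 1 ⊆ A)
    (hg : AnalyticOnNhd ℂ g A) (hginj : InjOn g A)
    (hg' : ∀ ζ ∈ Metric.sphere (0 : ℂ) 1, deriv g ζ ≠ 0) :
    ContinuousOn (unitTangent g) (g '' Metric.sphere 0 1) := by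
  have hψ := (hginj.mono hcirc).continuousOn_invFunOn_image (isCompact_sphere 0 1)
    (hg.continuousOn.mono hcirc)
  have hψS : MapsTo (invFunOn g (Metric.sphere 0 1)) (g '' Metric.sphere 0 1) (Metric.sphere 0 1) :=
    (surjOn_image g _).mapsTo_invFunOn
  have hg'ψ : ContinuousOn (fun z => deriv g (invFunOn g (Metric.sphere 0 1) z))
      (g '' Metric.sphere 0 1) := hg.deriv.continuousOn.comp hψ (hψS.mono_right hcirc)
  refine (hg'ψ.mul (hψ.mul continuousOn_const)).div
    (Complex.continuous_ofReal.comp_continuousOn hg'ψ.norm) fun z hz => ?_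
  exact Complex.ofReal_ne_zero.mpr (norm_ne_zero_iff.mpr (hg' _ (hψS hz)))

end CircleImage

theorem psq_ne_lsq_of_analytic_curve_general (A : Set ℂ)
    (hcirc : Metric.sphere (0 : ℂ) 1 ⊆ A)
    (g : ℂ → ℂ) (hg : AnalyticOnNhd ℂ g A) (hginj : Set.InjOn g A)
    (hg' : ∀ ζ ∈ Metric.sphere (0 : ℂ) 1, deriv g ζ ≠ 0)
    (w : ℂ → ℝ) (hw_cont : ContinuousOn w (g '' Metric.sphere (0 : ℂ) 1))
    (hw_pos : ∀ z ∈ g '' Metric.sphere (0 : ℂ) 1, 0 < w z)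
    (μ : Measure ℂ) [IsFiniteMeasure μ]
    (hμ : ∀ f : ℂ → ℂ, Measurable f → (∃ C : ℝ, ∀ z, ‖f z‖ ≤ C) →
      ∫ z, f z ∂μ = ∫ θ in (0 : ℝ)..(2 * Real.pi),
        f (g (Complex.exp (θ * Complex.I))) *
          ((w (g (Complex.exp (θ * Complex.I))) *
            ‖deriv g (Complex.exp (θ * Complex.I))‖ : ℝ) : ℂ)) :
    Psq μ ≠ Set.univ := by
  have hS := exp_ofReal_mul_I_mem_sphere
  have hΓ (θ : ℝ) : g (exp (θ * I)) ∈ g '' Metric.sphere 0 1 := mem_image_of_mem g (hS θ)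
  have hexp : Continuous fun θ : ℝ => exp (θ * I) := by fun_prop
  have hgS : ContinuousOn g (Metric.sphere 0 1) := hg.continuousOn.mono hcirc
  refine psq_ne_univ_of_loop hμ ((isCompact_sphere 0 1).image_of_continuousOn hgS) hΓ
    (D := fun z => unitTangent g z / w z)
    ((continuousOn_unitTangent hcirc hg hginj hg').div
      (Complex.continuous_ofReal.comp_continuousOn hw_cont)
      fun z hz => Complex.ofReal_ne_zero.mpr (hw_pos z hz).ne')
    (fun θ => ?_) (by simp [← Complex.exp_two_pi_mul_I]) Real.two_pi_pos
    ((hw_cont.comp_continuous (hgS.comp_continuous hexp hS) hΓ).mul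
      (hg.deriv.continuousOn.comp_continuous hexp fun θ => hcirc (hS θ)).norm)
    (fun θ => mul_pos (hw_pos _ (hΓ θ)) (norm_pos_iff.mpr (hg' _ (hS θ))))
    (fun θ => div_ne_zero (unitTangent_ne_zero (hginj.mono hcirc) (hS θ) (hg' _ (hS θ)))
      (Complex.ofReal_ne_zero.mpr (hw_pos _ (hΓ θ)).ne'))
  refine (hasDerivAt_comp_exp_ofReal_mul_I hcirc hg θ).congr_deriv ?_
  rw [← unitTangent_mul_norm_deriv (hginj.mono hcirc) (hS θ) (hg' _ (hS θ))]
  have hw0 := Complex.ofReal_ne_zero.mpr (hw_pos _ (hΓ θ)).ne'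
  push_cast
  field_simp

/-- let `A ⊆ ℂ` be an open annulus (open set) containing the unit circle,
`g : A → ℂ` analytic and injective with `g' ≠ 0` on the unit circle, so that
`Γ = g(unit circle)` is an analytic Jordan curve; let `w` be a continuous strictly
positive weight on `Γ`, and let `μ` be the weighted arc-length measure on `Γ`:
`∫ f dμ = ∫₀^{2π} f(g(e^{iθ})) · w(g(e^{iθ})) · |g'(e^{iθ})| dθ` for every bounded Borel
`f`.  Then `P²(μ) ≠ L²(μ)`. -/
theorem psq_ne_lsq_of_analytic_curve (A : Set ℂ) (hA : IsOpen A)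
    (hcirc : Metric.sphere (0 : ℂ) 1 ⊆ A)
    (g : ℂ → ℂ) (hg : AnalyticOnNhd ℂ g A) (hginj : Set.InjOn g A)
    (hg' : ∀ ζ ∈ Metric.sphere (0 : ℂ) 1, deriv g ζ ≠ 0)
    (w : ℂ → ℝ) (hw_cont : ContinuousOn w (g '' Metric.sphere (0 : ℂ) 1))
    (hw_pos : ∀ z ∈ g '' Metric.sphere (0 : ℂ) 1, 0 < w z)
    (μ : Measure ℂ) [IsFiniteMeasure μ]
    (hμ : ∀ f : ℂ → ℂ, Measurable f → (∃ C : ℝ, ∀ z, ‖f z‖ ≤ C) →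
      ∫ z, f z ∂μ = ∫ θ in (0 : ℝ)..(2 * Real.pi),
        f (g (Complex.exp (θ * Complex.I))) *
          ((w (g (Complex.exp (θ * Complex.I))) *
            ‖deriv g (Complex.exp (θ * Complex.I))‖ : ℝ) : ℂ)) :
    Psq μ ≠ Set.univ :=
  psq_ne_lsq_of_analytic_curve_general A hcirc g hg hginj hg' w hw_cont hw_pos μ hμ
end
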